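/- If a corrupted notary issues a certificate (K', M', C', s', Y', X', σ') and the honest seller's checks Y' = H(C'), X' = H(K'), M' = Dec(K', C') all pass, then in the subsequent honest execution the buyer who pays receives exactly M' — i.e., buyer output is determined by the certificate contents that passed the seller's validation, and the atomic swap still holds. -/

import Mathlib

theorem corrupted_notary_buyer_gets_validated_payload_general
    {Key Ct Msg Digest : Type}
    (H : Key → Digest) (hInj : Function.Injective H)
    (Dec : Key → Ct → Msg)
    (K' : Key) (M' : Msg) (C' : Ct) (X' : Digest)
    (hX : X' = H K') (hM : Dec K' C' = M') :
    Dec K' C' = M' ∧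
    (∀ K'' : Key, H K'' = X' → Dec K'' C' = M') ∧
    ((∃ K'' : Key, H K'' = X') ↔ (∃ K'' : Key, H K'' = X' ∧ Dec K'' C' = M')) := by
  have closing_key_decrypts : ∀ K'' : Key, H K'' = X' → Dec K'' C' = M' := by
    intro K'' hK''
    rwa [hInj (hK''.trans hX)]
  exact ⟨hM, closing_key_decrypts,
    exists_congr fun K'' => (and_iff_left_of_imp (closing_key_decrypts K'')).symm⟩

/-- even with a corrupted notary, if the seller's validation of
the certificate `(K', M', C', s', Y', X', σ')` passes (`Y' = H_c C'`,
`X' = H K'`, `Dec K' C' = M'`) and `H` is injective, then in the subsequent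
honest execution the buyer who pays receives exactly `M'`: the buyer's output
`Dec K' C'` equals `M'`, any key that can close the contract decrypts `C'` to
`M'`, and the atomic swap still holds (the transfer occurs iff the buyer
obtains a key giving `M'`). -/
theorem corrupted_notary_buyer_gets_validated_payload
    {Key Ct Msg Digest : Type}
    (H : Key → Digest) (hInj : Function.Injective H)
    (Hc : Ct → Digest) (Dec : Key → Ct → Msg)
    (K' : Key) (M' : Msg) (C' : Ct) (Y' X' : Digest)
    (hY : Y' = Hc C') (hX : X' = H K') (hM : Dec K' C' = M') :
    Dec K' C' = M' ∧
    (∀ K'' : Key, H K'' = X' → Dec K'' C' = M') ∧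
    ((∃ K'' : Key, H K'' = X') ↔ (∃ K'' : Key, H K'' = X' ∧ Dec K'' C' = M')) :=
  corrupted_notary_buyer_gets_validated_payload_general H hInj Dec K' M' C' X' hX hM
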